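/- With the same repeated-root setup, C^⊥ ⊆ C if and only if 2a_l ≤ p^η for all symmetric indices l and b_l + c_l ≤ p^η for all asymmetric pairs l. -/

import Mathlib

/-!
Comparing `p^η`-th powers (Frobenius is injective on `F[X]`) turns the factorization of
`x^L - λ` into `x^n - β^n = β^n ∏ M_i(β⁻¹x) ∏ M_j(β⁻¹x) M_{-j}(β⁻¹x)`, which is separable
because `p ∤ n`. So the factors `M_r(β⁻¹x)` are pairwise coprime non-units, and `g ∣ h†`
amounts to comparing exponents factor by factor: `a_l ≤ p^η - a_l`, `b_l ≤ p^η - c_l` and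
`c_l ≤ p^η - b_l`.
-/

open Polynomial

/-- The `q`-cyclotomic coset of `r` modulo `n`: `{r·qᵗ mod n : t ≥ 0}` (the powers
repeat with period at most `n`). -/
def qCoset (q n : ℕ) (r : ZMod n) : Finset (ZMod n) :=
  (Finset.range n).image (fun t => r * (q : ZMod n) ^ t)

/-- The minimal polynomial `M_r(x) = ∏_{i ∈ C_r} (x - ξⁱ)` associated with the
`q`-cyclotomic coset `C_r`. -/
noncomputable def cosetMinPoly (F : Type*) [Field F] (q n : ℕ) (ξ : F) (r : ZMod n) :
    Polynomial F :=
  ∏ i ∈ qCoset q n r, (Polynomial.X - Polynomial.C (ξ ^ i.val))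

open Finset Function

section RelPrimeProducts

variable {α ι κ : Type*} [CommMonoidWithZero α] [Fintype ι] [Fintype κ]

theorem Squarefree.pairwise_isRelPrime_of_prod {f : ι → α} (h : Squarefree (∏ k, f k)) :
    Pairwise (IsRelPrime on f) := by
  classical
  intro k l hkl
  refine IsRelPrime.of_squarefree_mul (h.squarefree_of_dvd ?_)
  rw [← prod_pair hkl]
  exact prod_dvd_prod_of_subset _ _ _ (subset_univ _)

theorem Squarefree.ne_zero_of_prod [Nontrivial α] {f : ι → α} (h : Squarefree (∏ k, f k))
    (k : ι) : f k ≠ 0 :=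
  (h.squarefree_of_dvd (dvd_prod_of_mem f (mem_univ k))).ne_zero

variable [IsCancelMulZero α] [DecompositionMonoid α]

theorem prod_pow_dvd_prod_pow_iff {f : ι → α} (hf : Pairwise (IsRelPrime on f))
    (hf₀ : ∀ k, f k ≠ 0) (hfu : ∀ k, ¬IsUnit (f k)) {u v : ι → ℕ} :
    ∏ k, f k ^ u k ∣ ∏ k, f k ^ v k ↔ ∀ k, u k ≤ v k := by
  classical
  refine ⟨fun h k => ?_, fun h => prod_dvd_prod_of_dvd _ _ fun k _ => pow_dvd_pow _ (h k)⟩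
  have hk : f k ^ u k ∣ f k ^ v k * ∏ l ∈ univ.erase k, f l ^ v l := by
    rw [mul_prod_erase _ (fun l => f l ^ v l) (mem_univ k)]
    exact (dvd_prod_of_mem _ (mem_univ k)).trans h
  have hcop : IsRelPrime (f k ^ u k) (∏ l ∈ univ.erase k, f l ^ v l) :=
    IsRelPrime.prod_right fun l hl => (hf (ne_of_mem_erase hl).symm).pow
  exact (pow_dvd_pow_iff (hf₀ k) (hfu k)).mp (hcop.dvd_of_dvd_mul_right hk)

theorem prod_pow_dvd_prod_pow_iff_of_squarefree [Nontrivial α] {f : ι → α}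
    (hsq : Squarefree (∏ k, f k)) (hfu : ∀ k, ¬IsUnit (f k)) {u v : ι → ℕ} :
    ∏ k, f k ^ u k ∣ ∏ k, f k ^ v k ↔ ∀ k, u k ≤ v k :=
  prod_pow_dvd_prod_pow_iff hsq.pairwise_isRelPrime_of_prod hsq.ne_zero_of_prod hfu

theorem prod_pow_mul_prod_pow_mul_pow_dvd_iff [Nontrivial α] {A : ι → α} {B C : κ → α}
    (hsq : Squarefree ((∏ k, A k) * ∏ l, B l * C l))
    (hA : ∀ k, ¬IsUnit (A k)) (hB : ∀ l, ¬IsUnit (B l)) (hC : ∀ l, ¬IsUnit (C l))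
    {a a' : ι → ℕ} {b b' c c' : κ → ℕ} :
    (∏ k, A k ^ a k) * ∏ l, B l ^ b l * C l ^ c l ∣
        (∏ k, A k ^ a' k) * ∏ l, B l ^ b' l * C l ^ c' l ↔
      (∀ k, a k ≤ a' k) ∧ (∀ l, b l ≤ b' l) ∧ ∀ l, c l ≤ c' l := by
  have hsum : ∀ a b c, (∏ k, A k ^ a k) * ∏ l, B l ^ b l * C l ^ c l =
      ∏ x, Sum.elim A (Sum.elim B C) x ^ Sum.elim a (Sum.elim b c) x := by
    intro a b c
    simp only [Fintype.prod_sum_type, Sum.elim_inl, Sum.elim_inr, prod_mul_distrib]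
  have hsq' : Squarefree (∏ x, Sum.elim A (Sum.elim B C) x) := by
    simpa only [Fintype.prod_sum_type, Sum.elim_inl, Sum.elim_inr, prod_mul_distrib] using hsq
  have hu : ∀ x, ¬IsUnit (Sum.elim A (Sum.elim B C) x) :=
    Sum.forall.mpr ⟨hA, Sum.forall.mpr ⟨hB, hC⟩⟩
  rw [hsum, hsum, prod_pow_dvd_prod_pow_iff_of_squarefree hsq' hu]
  simp only [Sum.forall, Sum.elim_inl, Sum.elim_inr]

end RelPrimeProducts

theorem Polynomial.squarefree_of_X_pow_sub_C_eq_C_mul_pow {F : Type*} [Field F] {p : ℕ}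
    [Fact p.Prime] [CharP F p] {n : ℕ} (hpn : ¬p ∣ n) {β : F} (hβ : β ≠ 0) {P : F[X]} (e : ℕ)
    (h : X ^ (p ^ e * n) - C (β ^ (p ^ e * n)) = C (β ^ (p ^ e * n)) * P ^ p ^ e) :
    Squarefree P := by
  have hpow : (X ^ n - C (β ^ n)) ^ p ^ e = (C (β ^ n) * P) ^ p ^ e := by
    rw [sub_pow_char_pow, mul_pow, ← C_pow, ← pow_mul, ← pow_mul, mul_comm n, h]
  have hroot : X ^ n - C (β ^ n) = C (β ^ n) * P := iterateFrobenius_inj F[X] p e hpow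
  have hsep := separable_X_pow_sub_C' p n _ hpn (pow_ne_zero n hβ)
  exact (hroot ▸ hsep.squarefree).of_mul_right

theorem mem_qCoset_self {q n : ℕ} (hn : 0 < n) (r : ZMod n) : r ∈ qCoset q n r :=
  mem_image.mpr ⟨0, mem_range.mpr hn, by simp⟩

theorem natDegree_cosetMinPoly (F : Type*) [Field F] (q n : ℕ) (ξ : F) (r : ZMod n) :
    (cosetMinPoly F q n ξ r).natDegree = #(qCoset q n r) := by
  rw [cosetMinPoly, natDegree_prod _ _ fun _ _ => X_sub_C_ne_zero _]
  simp only [natDegree_X_sub_C, sum_const, smul_eq_mul, mul_one]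

theorem cosetMinPoly_comp_not_isUnit {F : Type*} [Field F] {q n : ℕ} (hn : 0 < n) (ξ : F)
    {β : F} (hβ : β ≠ 0) (r : ZMod n) :
    ¬IsUnit ((cosetMinPoly F q n ξ r).comp (C β⁻¹ * X)) := by
  refine not_isUnit_of_natDegree_pos _ ?_
  rw [natDegree_comp, natDegree_C_mul_X _ (inv_ne_zero hβ), mul_one, natDegree_cosetMinPoly]
  exact card_pos.mpr ⟨r, mem_qCoset_self hn r⟩

theorem repeatedRoot_dual_containing_iff_general
    (F : Type*) [Field F] (p η n q L ρ₁ ρ₂ : ℕ) [Fact p.Prime] [CharP F p]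
    (hpn : ¬ p ∣ n) (hn : 0 < n) (hL : L = p ^ η * n)
    (ξ β lam : F) (hβ : β ≠ 0) (hlam : β ^ L = lam)
    (i : Fin ρ₁ → ZMod n) (j : Fin ρ₂ → ZMod n)
    (a : Fin ρ₁ → ℕ) (b c : Fin ρ₂ → ℕ)
    (hfact : (X : F[X]) ^ L - C lam =
      C lam * (∏ l, ((cosetMinPoly F q n ξ (i l)).comp (C β⁻¹ * X)) ^ (p ^ η)) *
        ∏ l, ((cosetMinPoly F q n ξ (j l)).comp (C β⁻¹ * X) *
              (cosetMinPoly F q n ξ (-(j l))).comp (C β⁻¹ * X)) ^ (p ^ η))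
    (g hdag : F[X])
    (hg : g = (∏ l, ((cosetMinPoly F q n ξ (i l)).comp (C β⁻¹ * X)) ^ (a l)) *
      ∏ l, ((cosetMinPoly F q n ξ (j l)).comp (C β⁻¹ * X)) ^ (b l) *
            ((cosetMinPoly F q n ξ (-(j l))).comp (C β⁻¹ * X)) ^ (c l))
    (hh : hdag = (∏ l, ((cosetMinPoly F q n ξ (i l)).comp (C β⁻¹ * X)) ^ (p ^ η - a l)) *
      ∏ l, ((cosetMinPoly F q n ξ (-(j l))).comp (C β⁻¹ * X)) ^ (p ^ η - b l) *
            ((cosetMinPoly F q n ξ (j l)).comp (C β⁻¹ * X)) ^ (p ^ η - c l)) :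
    g ∣ hdag ↔ (∀ l, 2 * a l ≤ p ^ η) ∧ (∀ l, b l + c l ≤ p ^ η) := by
  subst hL hlam hg hh
  rw [mul_assoc, prod_pow, prod_pow, ← mul_pow] at hfact
  have hsq := squarefree_of_X_pow_sub_C_eq_C_mul_pow hpn hβ η hfact
  have hM := cosetMinPoly_comp_not_isUnit (q := q) hn ξ hβ
  simp_rw [mul_comm (((cosetMinPoly F q n ξ (-j _)).comp (C β⁻¹ * X)) ^ (p ^ η - b _))]
  rw [prod_pow_mul_prod_pow_mul_pow_dvd_iff hsq (fun _ => hM _) (fun _ => hM _) fun _ => hM _]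
  constructor
  · rintro ⟨haa, hbc, hcb⟩
    exact ⟨fun l => by have := haa l; omega, fun l => by have := hbc l; have := hcb l; omega⟩
  · rintro ⟨haa, hbc⟩
    exact ⟨fun l => by have := haa l; omega, fun l => by have := hbc l; omega,
      fun l => by have := hbc l; omega⟩

/-- repeated-root constacyclic codes, dual-containment. With
`L = pᶯ n`, `p ∤ n`, generator
`g = ∏ M_{i_l}(β⁻¹x)^{a_l} ∏ M_{j_l}(β⁻¹x)^{b_l} M_{-j_l}(β⁻¹x)^{c_l}` over symmetric
cosets `C_{i_l}` and asymmetric pairs `(C_{j_l}, C_{-j_l})`, and dual generator `h†`,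
one has `C^⊥ ⊆ C` (i.e. `g ∣ h†`) iff `2a_l ≤ pᶯ` and `b_l + c_l ≤ pᶯ` for all `l`. -/
theorem repeatedRoot_dual_containing_iff
    (F : Type*) [Field F] (p η n q L ρ₁ ρ₂ : ℕ) [Fact p.Prime] [CharP F p]
    (hpn : ¬ p ∣ n) (hn : 0 < n) (hL : L = p ^ η * n)
    (ξ β lam : F) (hξ : IsPrimitiveRoot ξ n) (hβ : β ≠ 0) (hlam : β ^ L = lam)
    (i : Fin ρ₁ → ZMod n) (j : Fin ρ₂ → ZMod n)
    (a : Fin ρ₁ → ℕ) (b c : Fin ρ₂ → ℕ)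
    (hsym : ∀ l, -(i l) ∈ qCoset q n (i l))
    (hasym : ∀ l, -(j l) ∉ qCoset q n (j l))
    (ha : ∀ l, a l ≤ p ^ η) (hb : ∀ l, b l ≤ p ^ η) (hc : ∀ l, c l ≤ p ^ η)
    (hfact : (X : F[X]) ^ L - C lam =
      C lam * (∏ l, ((cosetMinPoly F q n ξ (i l)).comp (C β⁻¹ * X)) ^ (p ^ η)) *
        ∏ l, ((cosetMinPoly F q n ξ (j l)).comp (C β⁻¹ * X) *
              (cosetMinPoly F q n ξ (-(j l))).comp (C β⁻¹ * X)) ^ (p ^ η))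
    (g hdag : F[X])
    (hg : g = (∏ l, ((cosetMinPoly F q n ξ (i l)).comp (C β⁻¹ * X)) ^ (a l)) *
      ∏ l, ((cosetMinPoly F q n ξ (j l)).comp (C β⁻¹ * X)) ^ (b l) *
            ((cosetMinPoly F q n ξ (-(j l))).comp (C β⁻¹ * X)) ^ (c l))
    (hh : hdag = (∏ l, ((cosetMinPoly F q n ξ (i l)).comp (C β⁻¹ * X)) ^ (p ^ η - a l)) *
      ∏ l, ((cosetMinPoly F q n ξ (-(j l))).comp (C β⁻¹ * X)) ^ (p ^ η - b l) *
            ((cosetMinPoly F q n ξ (j l)).comp (C β⁻¹ * X)) ^ (p ^ η - c l)) :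
    g ∣ hdag ↔ (∀ l, 2 * a l ≤ p ^ η) ∧ (∀ l, b l + c l ≤ p ^ η) :=
  repeatedRoot_dual_containing_iff_general F p η n q L ρ₁ ρ₂ hpn hn hL ξ β lam hβ hlam i j a b c
    hfact g hdag hg hh
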